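/- Let α₁, α₂, α₃ ∈ ℂ and let x : ℤ → ℂ satisfy equation (E) at every v ∈ ℤ. Then for every v ∈ ℤ (writing z_i = x(v+i), including z₋₁ = x(v−1)): (2z₀²z₃ + α₂z₀z₁z₂ + α₃z₁³)² = (2z₋₁z₂² + α₂z₀z₁z₂ + α₃z₁³)² = D(x,v). -/
import Mathlib


noncomputable section

/-- Equation (E) at `v`. -/
def eqE (α₁ α₂ α₃ : ℂ) (x : ℤ → ℂ) (v : ℤ) : Prop :=
  (x v)^2 * (x (v+3))^2 + α₁ * (x (v+1))^2 * (x (v+2))^2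
    + α₂ * x v * x (v+1) * x (v+2) * x (v+3)
    + α₃ * (x v * (x (v+2))^3 + (x (v+1))^3 * x (v+3)) = 0

/-- The discriminant `D` at `v`. -/
def D1 (α₁ α₂ α₃ : ℂ) (x : ℤ → ℂ) (v : ℤ) : ℂ :=
  α₃^2 * (x (v+1))^6 + 2 * α₂ * α₃ * x v * (x (v+1))^4 * x (v+2)
    + (α₂^2 - 4 * α₁) * (x v)^2 * (x (v+1))^2 * (x (v+2))^2
    - 4 * α₃ * (x v)^3 * (x (v+2))^3

/-- Proposition A2B2propgen1d. -/
theorem statement16 (α₁ α₂ α₃ : ℂ) (x : ℤ → ℂ)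
    (hx : ∀ v : ℤ, eqE α₁ α₂ α₃ x v) :
    ∀ v : ℤ,
      (2 * (x v)^2 * x (v+3) + α₂ * x v * x (v+1) * x (v+2) + α₃ * (x (v+1))^3)^2
        = D1 α₁ α₂ α₃ x v ∧
      (2 * x (v-1) * (x (v+2))^2 + α₂ * x v * x (v+1) * x (v+2) + α₃ * (x (v+1))^3)^2
        = D1 α₁ α₂ α₃ x v := by
  intro v
  have h1 := hx v
  have h2 := hx (v-1)
  unfold eqE at h1 h2
  have e1 : v-1+1 = v := by ring
  have e2 : v-1+2 = v+1 := by ring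
  have e3 : v-1+3 = v+2 := by ring
  rw [e1, e2, e3] at h2
  unfold D1
  constructor
  · linear_combination 4 * (x v)^2 * h1
  · linear_combination 4 * (x (v+2))^2 * h2
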